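/- There are mutual surjections between N_1 and 𝒫(ω), i.e. |N_1| ≈ |𝒫(ω)|. Consequently, a nonzero von Neumann ordinal belongs to N_2 if and only if it is a surjective image of 𝒫(ω); that is, the set of ordinals belonging to N_2 equals Θ, the least ordinal that is not a surjective image of 𝒫(ω). -/

import Mathlib

/-!
Write `c = 2 ^ ℵ₀`. As `N_0 = V_ω` is countable, `N_1` is the set of hereditarily countable
sets. It contains `𝒫(ω)`, and it has at most `c` members: such a set `Y` is determined by the
relation `{(m, n) | e m ∈ e n}` on `ℕ`, where `e` enumerates the transitive closure of `{Y}`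
with `e 0 = Y`, because two transitive sets enumerated with the same membership relation agree
(∈-induction). So `|N_1| = c`, a transitive set lies in `N_2 = H_{N_1}` iff it has at most `c`
members, and the ordinals in `N_2` are exactly those below the initial ordinal of `c⁺`.
-/

namespace NairianModels

open ZFSet

/-! ## Basic cardinality notions -/

/-- `f` codes a surjection from `X` onto `Y`: a set of Kuratowski ordered pairs that is a
function with domain `X` and values in `Y`, every element of `Y` being a value. -/
def ZFSurj (X Y f : ZFSet) : Prop :=
  ZFSet.IsFunc X Y f ∧ ∀ y ∈ Y, ∃ x ∈ X, ZFSet.pair x y ∈ f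

/-- `|X| ≲ |Y|`: either `X = ∅` or there is a surjection from `Y` onto `X`. -/
def CardLE (X Y : ZFSet) : Prop :=
  X = ∅ ∨ ∃ f, ZFSurj Y X f

/-- `|X| ≈ |Y|`. -/
def CardEq (X Y : ZFSet) : Prop :=
  CardLE X Y ∧ CardLE Y X

/-- `X` is a maximal cardinality of `M`: `X ∈ M` and every nonempty `Y ∈ M` is the image of a
surjection from `X` that belongs to `M`. -/
def IsMaxCard (X M : ZFSet) : Prop :=
  X ∈ M ∧ ∀ Y ∈ M, Y = ∅ ∨ ∃ f ∈ M, ZFSurj X Y f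

/-- `M` is of successor type: it has a maximal cardinality. -/
def SuccType (M : ZFSet) : Prop :=
  ∃ X, IsMaxCard X M

/-! ## Fullness -/

def TransClosed (M : ZFSet) : Prop :=
  ∀ Y ∈ M, ∃ Z ∈ M, Z.IsTransitive ∧ Z ⊆ M ∧ Y ∈ Z

def ProdClosed (M : ZFSet) : Prop :=
  ∀ X ∈ M, ∀ Y ∈ M, ZFSet.prod X Y ∈ M

def SubsetClosed (M : ZFSet) : Prop :=
  ∀ X ∈ M, ZFSet.powerset X ⊆ M

def Full (M : ZFSet) : Prop :=
  TransClosed M ∧ ProdClosed M ∧ SubsetClosed M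

/-! ## Ordinals, strong regularity, hierarchicality, H-likeness -/

/-- von Neumann ordinal: a transitive set linearly ordered by `∈`. -/
def IsOrd (x : ZFSet) : Prop :=
  x.IsTransitive ∧
    (∀ y ∈ x, ∀ z ∈ x, y ∈ z ∨ y = z ∨ z ∈ y) ∧
    (∀ a ∈ x, ∀ b ∈ x, ∀ c ∈ x, a ∈ b → b ∈ c → a ∈ c)

/-- limit (von Neumann) ordinal: a nonempty ordinal with no largest element. -/
def IsLimitOrd (x : ZFSet) : Prop :=
  IsOrd x ∧ x ≠ ∅ ∧ ∀ y ∈ x, ∃ z ∈ x, y ∈ z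

/-- `M` is strongly regular: any (set-coded) function from an `X ∈ M` to the ordinals
belonging to `M` is bounded by an ordinal in `M`. -/
def StronglyRegular (M : ZFSet) : Prop :=
  ∀ X ∈ M, ∀ f : ZFSet,
    (∀ p ∈ f, ∃ x ∈ X, ∃ o, IsOrd o ∧ o ∈ M ∧ p = ZFSet.pair x o) →
    (∀ x ∈ X, ∃ o, ZFSet.pair x o ∈ f) →
    (∀ x ∈ X, ∀ o o', ZFSet.pair x o ∈ f → ZFSet.pair x o' ∈ f → o = o') →
    ∃ β, IsOrd β ∧ β ∈ M ∧ ∀ x ∈ X, ∀ o, ZFSet.pair x o ∈ f → o ∈ β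

/-- `M` is hierarchical: it is the continuous increasing union, along the ordinals belonging
to `M`, of transitive sets belonging to `M`. -/
def Hierarchical (M : ZFSet) : Prop :=
  ∃ F : ZFSet → ZFSet,
    (∀ α, IsOrd α → α ∈ M → (F α).IsTransitive ∧ F α ∈ M) ∧
    (∀ α β, IsOrd α → IsOrd β → α ∈ M → β ∈ M → α ∈ β → F α ⊆ F β) ∧
    (∀ β, IsLimitOrd β → β ∈ M → ∀ x, x ∈ F β ↔ ∃ α ∈ β, x ∈ F α) ∧
    (∀ x, x ∈ M ↔ ∃ α, IsOrd α ∧ α ∈ M ∧ x ∈ F α)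

/-- `M` is H-like: transitive, full, hierarchical, and strongly regular in case it is of
successor type. -/
def HLike (M : ZFSet) : Prop :=
  M.IsTransitive ∧ Full M ∧ Hierarchical M ∧ (SuccType M → StronglyRegular M)

/-! ## Transitive closure and the classes `H_X` -/

/-- Iterated unions: `iterUnion x n = ⋃ⁿ x`. -/
def iterUnion (x : ZFSet) : ℕ → ZFSet
  | 0 => x
  | n + 1 => ZFSet.sUnion (iterUnion x n)

/-- The transitive closure of `x` (the least transitive set including `x`):
`x ∪ ⋃x ∪ ⋃⋃x ∪ ⋯`. -/
noncomputable def transCl (x : ZFSet) : ZFSet :=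
  ZFSet.sUnion (ZFSet.range fun n : ℕ => iterUnion x n)

/-- `Y ∈ H_X`: there is a surjection from `X` onto the transitive closure of `{Y}`. -/
def MemH (X Y : ZFSet) : Prop :=
  ∃ f, ZFSurj X (transCl ({Y} : ZFSet)) f

/-! ## First-order logic over `(W, ∈)` -/

/-- Formulas of the language of set theory, with variables indexed by `ℕ`. -/
inductive Fml : Type
  | mem : ℕ → ℕ → Fml
  | equal : ℕ → ℕ → Fml
  | not : Fml → Fml
  | and : Fml → Fml → Fml
  | ex : ℕ → Fml → Fml

/-- Satisfaction of a formula in the structure `(D, ∈)` under the assignment `v`. -/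
def Sat (D : ZFSet) : Fml → (ℕ → ZFSet) → Prop
  | .mem i j, v => v i ∈ v j
  | .equal i j, v => v i = v j
  | .not φ, v => ¬ Sat D φ v
  | .and φ ψ, v => Sat D φ v ∧ Sat D ψ v
  | .ex n φ, v => ∃ a, a ∈ D ∧ Sat D φ (Function.update v n a)

/-- `(X, ∈)` is an elementary substructure of `(W, ∈)`. -/
def ElemSub (X W : ZFSet) : Prop :=
  X ⊆ W ∧ ∀ (φ : Fml) (v : ℕ → ZFSet), (∀ n, v n ∈ X) → (Sat X φ v ↔ Sat W φ v)

/-- `π` is an elementary embedding of `(M, ∈)` into `(W, ∈)`. -/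
def IsElemEmb (M W : ZFSet) (π : ZFSet → ZFSet) : Prop :=
  (∀ x ∈ M, π x ∈ W) ∧
    ∀ (φ : Fml) (v : ℕ → ZFSet), (∀ n, v n ∈ M) →
      (Sat M φ v ↔ Sat W φ fun n => π (v n))

/-- `M` is `X`-closed: `X ∪ {X} ⊆ M` and every (set-coded) function from `X` into `M`
belongs to `M`. -/
def XClosed (X M : ZFSet) : Prop :=
  X ⊆ M ∧ X ∈ M ∧ ∀ f, ZFSet.IsFunc X M f → f ∈ M

/-- `M` is definably closed: any subset of a transitive `N ∈ M` definable over `(N, ∈)` with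
parameters in `N` belongs to `M`. -/
def DefClosed (M : ZFSet) : Prop :=
  ∀ N, N ∈ M → N.IsTransitive →
    ∀ (φ : Fml) (v : ℕ → ZFSet), (∀ n, v n ∈ N) →
      ∀ A : ZFSet, (∀ y, y ∈ A ↔ y ∈ N ∧ Sat N φ (Function.update v 0 y)) → A ∈ M

/-- The reflection principle `ref(X, Y, Z)`. -/
def Ref (X Y Z : ZFSet) : Prop :=
  ∀ W a : ZFSet, W.IsTransitive → XClosed X W → Y ∈ W → a ∈ W →
    ∃ (M : ZFSet) (π : ZFSet → ZFSet),
      M.IsTransitive ∧ IsElemEmb M W π ∧ ({X, Y} : ZFSet) ∈ M ∧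
      (∃ x ∈ M, π x = a) ∧ M ∈ Z ∧
      (∀ z, z ∈ X ∨ z ∈ Y ∨ z = X ∨ z = Y → π z = z) ∧ XClosed X M

/-! ## The N-hierarchy -/

/-- Hereditarily finite sets. -/
def HFin : ZFSet → Prop :=
  ZFSet.mem_wf.fix (C := fun _ => Prop) fun x IH =>
    x.toSet.Finite ∧ ∀ y, ∀ h : y ∈ x, IH y h

/-- `F` is the N-hierarchy: `F 0` is the set of hereditarily finite sets, `F 1 = H_{F 0}`,
`F (α+2) = H_{F (α+1)}`, and for limit `α`, `F α = ⋃_{β<α} F β` and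
`F (α+1) = H_{𝒫(F α)}`. -/
def IsNHierarchy (F : Ordinal → ZFSet) : Prop :=
  (∀ Y, Y ∈ F 0 ↔ HFin Y) ∧
  (∀ Y, Y ∈ F 1 ↔ MemH (F 0) Y) ∧
  (∀ α : Ordinal, ∀ Y, Y ∈ F (α + 2) ↔ MemH (F (α + 1)) Y) ∧
  (∀ α : Ordinal, Order.IsSuccLimit α →
    (∀ Y, Y ∈ F α ↔ ∃ β < α, Y ∈ F β) ∧
    (∀ Y, Y ∈ F (α + 1) ↔ MemH (ZFSet.powerset (F α)) Y))

/-! ## Auxiliary product constructions -/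

/-- Left-nested cartesian product `Y 0 × Y 1 × ⋯ × Y n`. -/
def nestedProd (Y : ℕ → ZFSet) : ℕ → ZFSet
  | 0 => Y 0
  | n + 1 => ZFSet.prod (nestedProd Y n) (Y (n + 1))

/-- Left-nested cartesian power `X^n` (with junk value `∅` at `n = 0`). -/
def nPow (X : ZFSet) : ℕ → ZFSet
  | 0 => ∅
  | 1 => X
  | n + 2 => ZFSet.prod (nPow X (n + 1)) X

/-- `W` is `<κ`-closed: every function from an ordinal `η < κ` into `W` belongs to `W`. -/
def LtClosed (κ W : ZFSet) : Prop :=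
  ∀ η ∈ κ, ∀ f, ZFSet.IsFunc η W f → f ∈ W

end NairianModels

open Cardinal
open scoped Ordinal

universe u

namespace ZFSet

lemma mk_ofNat_eq_toZFSet (n : ℕ) : mk (PSet.ofNat n) = (n : Ordinal.{u}).toZFSet := by
  induction n with
  | zero => rw [Nat.cast_zero, Ordinal.toZFSet_zero]; rfl
  | succ n ih => rw [Nat.cast_succ, Ordinal.toZFSet_add_one, ← ih]; rfl

lemma omega_eq_toZFSet_omega0 : omega.{u} = (ω : Ordinal.{u}).toZFSet := by
  ext z
  rw [Ordinal.mem_toZFSet_iff]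
  constructor
  · refine Quotient.inductionOn z fun x hx => ?_
    obtain ⟨⟨n⟩, hn⟩ := mk_mem_iff.1 hx
    exact ⟨n, Ordinal.natCast_lt_omega0 n,
      (mk_ofNat_eq_toZFSet n).symm.trans (Quotient.sound hn).symm⟩
  · rintro ⟨a, ha, rfl⟩
    obtain ⟨n, rfl⟩ := Ordinal.lt_omega0.1 ha
    rw [← mk_ofNat_eq_toZFSet]
    exact mk_mem_iff.2 ⟨⟨n⟩, PSet.Equiv.refl _⟩

lemma isTransitive_omega : omega.{u}.IsTransitive := by
  rw [omega_eq_toZFSet_omega0]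
  exact (isOrdinal_toZFSet _).isTransitive

lemma card_omega : omega.{u}.card = ℵ₀ := by
  rw [omega_eq_toZFSet_omega0, Ordinal.card_toZFSet, Ordinal.card_omega0]

lemma card_powerset_omega : (powerset omega.{u}).card = 2 ^ ℵ₀ := by
  rw [card_powerset, card_omega]

lemma card_vonNeumann_omega0 : (V_ ω : ZFSet.{u}).card = ℵ₀ := by
  rw [card_vonNeumann, preBeth_omega]

lemma finite_of_rank_lt_omega0 {x : ZFSet.{u}} (hx : x.rank < ω) : x.toSet.Finite := by
  have hcard : x.card < ℵ₀ := calc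
    x.card ≤ (V_ x.rank).card := card_mono (subset_vonNeumann_self x)
    _ = preBeth x.rank := card_vonNeumann _
    _ < ℵ₀ := preBeth_omega ▸ preBeth_lt_preBeth.2 hx
  rw [← lt_aleph0_iff_set_finite]
  exact (cardinalMk_coe_sort (x := x)).symm ▸ lift_lt_aleph0.2 hcard

lemma mem_toZFSet_ord_succ_iff {c : Cardinal.{u}} {x : ZFSet.{u}} :
    x ∈ (Order.succ c).ord.toZFSet ↔ x.IsOrdinal ∧ x.card ≤ c := by
  rw [Ordinal.mem_toZFSet_iff]
  constructor
  · rintro ⟨a, ha, rfl⟩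
    rw [Ordinal.card_toZFSet, ← Order.lt_succ_iff, ← lt_ord]
    exact ⟨isOrdinal_toZFSet a, ha⟩
  · rintro ⟨hx, hcard⟩
    rw [← hx.toZFSet_rank_eq, Ordinal.card_toZFSet, ← Order.lt_succ_iff, ← lt_ord] at hcard
    exact ⟨x.rank, hcard, hx.toZFSet_rank_eq⟩

lemma IsTransitive.enum_eq_of_mem_iff {ι : Type*} {T T' : ZFSet} {e e' : ι → ZFSet}
    (hT : T.IsTransitive) (hT' : T'.IsTransitive) (he : Set.range e = T)
    (he' : Set.range e' = T') (hmem : ∀ i j, e i ∈ e j ↔ e' i ∈ e' j) (i : ι) :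
    e i = e' i := by
  induction i using (InvImage.wf e mem_wf).induction with
  | _ j ih =>
  ext z
  constructor
  · intro hz
    obtain ⟨i, rfl⟩ : z ∈ Set.range e :=
      he.superset (hT.mem_trans hz (he.subset ⟨j, rfl⟩))
    exact ih i hz ▸ (hmem i j).1 hz
  · intro hz
    obtain ⟨i, rfl⟩ : z ∈ Set.range e' :=
      he'.superset (hT'.mem_trans hz (he'.subset ⟨j, rfl⟩))
    have hij := (hmem i j).2 hz
    exact ih i hij ▸ hij

end ZFSet

namespace NairianModels

open ZFSet

section Surjections

variable {X Y f : ZFSet.{u}}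

lemma ZFSurj.card_le (h : ZFSurj X Y f) : Y.card ≤ X.card := by
  rw [← lift_le.{u + 1}, ← cardinalMk_coe_sort, ← cardinalMk_coe_sort]
  choose g hgX hgf using h.2
  refine mk_le_of_injective (f := fun y : Y => (⟨g y y.2, hgX y y.2⟩ : X)) ?_
  rintro ⟨y, hy⟩ ⟨y', hy'⟩ hgg
  obtain ⟨w, -, hw⟩ := h.1.2 _ (hgX y hy)
  have hgg : g y hy = g y' hy' := congrArg Subtype.val hgg
  exact Subtype.ext ((hw y (hgf y hy)).trans (hw y' (hgg ▸ hgf y' hy')).symm)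

lemma exists_zfSurj_of_card_le (hY : Y.Nonempty) (h : Y.card ≤ X.card) :
    ∃ f, ZFSurj X Y f := by
  classical
  rw [← lift_le.{u + 1}, ← cardinalMk_coe_sort, ← cardinalMk_coe_sort] at h
  obtain ⟨i⟩ := h
  have : Nonempty Y := hY.to_subtype
  obtain ⟨g, hg⟩ : ∃ g : X → Y, Function.Surjective g :=
    ⟨_, Function.invFun_surjective i.injective⟩
  let := Classical.allZFSetDefinable fun s : Fin 1 → ZFSet.{u} =>
    if hx : s 0 ∈ X then (g ⟨s 0, hx⟩ : ZFSet) else ∅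
  refine ⟨map (fun x => if hx : x ∈ X then (g ⟨x, hx⟩ : ZFSet) else ∅) X,
    map_isFunc.2 fun x hx => by simp only [dif_pos hx]; exact (g ⟨x, hx⟩).2, fun y hy => ?_⟩
  obtain ⟨⟨x, hx⟩, hxy⟩ := hg ⟨y, hy⟩
  exact ⟨x, hx, mem_map.2 ⟨x, hx, by simp only [dif_pos hx, hxy]⟩⟩

lemma exists_zfSurj_iff_card_le (hY : Y.Nonempty) : (∃ f, ZFSurj X Y f) ↔ Y.card ≤ X.card :=
  ⟨fun ⟨_, hf⟩ => hf.card_le, exists_zfSurj_of_card_le hY⟩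

lemma cardLE_iff_card_le : CardLE Y X ↔ Y.card ≤ X.card := by
  rcases Y.eq_empty_or_nonempty with rfl | hY
  · simp [CardLE]
  · rw [CardLE, ← exists_zfSurj_iff_card_le hY,
      or_iff_right fun h : Y = ∅ => not_nonempty_empty (h ▸ hY)]

end Surjections

lemma isOrd_iff_isOrdinal {x : ZFSet.{u}} : IsOrd x ↔ x.IsOrdinal := by
  refine ⟨fun h => isOrdinal_iff_isTrans.2 ⟨h.1, ⟨fun a b c hab hbc =>
    h.2.2 a a.2 b b.2 c c.2 hab hbc⟩⟩, fun h => ⟨h.isTransitive, fun y hy z hz =>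
    IsOrdinal.mem_trichotomous (h.mem hy) (h.mem hz), fun _ _ _ _ _ hc hab hbc =>
    h.mem_trans' hab hbc hc⟩⟩

lemma hFin_iff {x : ZFSet.{u}} : HFin x ↔ x.toSet.Finite ∧ ∀ y ∈ x, HFin y := by
  rw [HFin, WellFounded.fix_eq]

lemma hFin_iff_mem_vonNeumann_omega0 {x : ZFSet.{u}} : HFin x ↔ x ∈ V_ ω := by
  rw [mem_vonNeumann]
  induction x using mem_wf.induction with
  | _ x ih =>
  rw [hFin_iff]
  constructor
  · rintro ⟨hfin, hmem⟩
    choose n hn using fun y : x.toSet => Ordinal.lt_omega0.1 ((ih y y.2).1 (hmem y y.2))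
    have := hfin.to_subtype
    obtain ⟨N, hN⟩ := (Set.finite_range n).bddAbove
    refine (rank_le_iff.2 fun y hy => ?_).trans_lt (Ordinal.natCast_lt_omega0 (N + 1))
    rw [hn ⟨y, hy⟩]
    exact_mod_cast Nat.lt_succ_of_le (hN ⟨_, rfl⟩)
  · exact fun hx => ⟨finite_of_rank_lt_omega0 hx,
      fun y hy => (ih y hy).2 ((rank_lt_of_mem hy).trans hx)⟩

section TransitiveClosure

variable {x y A T X Y : ZFSet.{0}}

lemma mem_transCl : y ∈ transCl x ↔ ∃ n, y ∈ iterUnion x n := by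
  simp [transCl]

lemma subset_transCl : x ⊆ transCl x :=
  fun _ hy => mem_transCl.2 ⟨0, hy⟩

lemma mem_transCl_singleton (Y : ZFSet.{0}) : Y ∈ transCl {Y} :=
  subset_transCl (mem_singleton.2 rfl)

lemma isTransitive_transCl (x : ZFSet.{0}) : (transCl x).IsTransitive := by
  intro y hy z hz
  obtain ⟨n, hn⟩ := mem_transCl.1 hy
  exact mem_transCl.2 ⟨n + 1, mem_sUnion_of_mem hz hn⟩

lemma transCl_subset (hT : T.IsTransitive) (h : x ⊆ T) : transCl x ⊆ T := by
  have hiter : ∀ n, iterUnion x n ⊆ T := by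
    intro n
    induction n with
    | zero => exact h
    | succ n ih =>
      intro z hz
      obtain ⟨w, hw, hzw⟩ := mem_sUnion.1 hz
      exact hT.mem_trans hzw (ih hw)
  intro y hy
  obtain ⟨n, hn⟩ := mem_transCl.1 hy
  exact hiter n hn

lemma transCl_singleton_subset_insert (hT : T.IsTransitive) (hA : A ⊆ T) :
    transCl {A} ⊆ insert A T := by
  refine transCl_subset (fun z hz w hw => ?_) fun w hw => mem_singleton.1 hw ▸ mem_insert A T
  rcases mem_insert_iff.1 hz with rfl | hz
  · exact mem_insert_of_mem _ (hA hw)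
  · exact mem_insert_of_mem _ (hT.mem_trans hw hz)

lemma transCl_singleton_of_isTransitive (hY : Y.IsTransitive) : transCl {Y} = insert Y Y := by
  refine (transCl_singleton_subset_insert hY subset_rfl).antisymm fun z hz => ?_
  rcases mem_insert_iff.1 hz with rfl | hz
  · exact mem_transCl_singleton z
  · exact (isTransitive_transCl _).mem_trans hz (mem_transCl_singleton Y)

lemma card_transCl_singleton_le_iff (hY : Y.IsTransitive) {κ : Cardinal} (hκ : ℵ₀ ≤ κ) :
    (transCl {Y}).card ≤ κ ↔ Y.card ≤ κ := by
  rw [transCl_singleton_of_isTransitive hY]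
  refine ⟨fun h => (card_mono fun _ => mem_insert_of_mem Y).trans h, fun h => ?_⟩
  exact card_insert_le.trans ((add_le_add_left h 1).trans (add_one_eq hκ).le)

lemma memH_iff_card_le : MemH X Y ↔ (transCl {Y}).card ≤ X.card :=
  exists_zfSurj_iff_card_le ⟨Y, mem_transCl_singleton Y⟩

lemma card_transCl_singleton_le_aleph0 (hA : A ⊆ omega) : (transCl {A}).card ≤ ℵ₀ :=
  calc (transCl {A}).card ≤ (insert A omega).card :=
        card_mono (transCl_singleton_subset_insert isTransitive_omega hA)
    _ ≤ ℵ₀ + 1 := card_omega ▸ card_insert_le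
    _ = ℵ₀ := add_one_eq le_rfl

lemma card_le_two_pow_aleph0_of_countable_transCl {W : ZFSet.{0}}
    (hW : ∀ Y ∈ W, (transCl {Y}).card ≤ ℵ₀) : W.card ≤ 2 ^ ℵ₀ := by
  have henum : ∀ Y : W, ∃ e : ℕ → ZFSet, Set.range e = transCl {Y.1} ∧ e 0 = Y := by
    rintro ⟨Y, hY⟩
    have hcount : (transCl {Y} : Set ZFSet).Countable := by
      rw [← Set.countable_coe_iff, ← mk_le_aleph0_iff]
      exact cardinalMk_coe_sort.trans_le (lift_le_aleph0.2 (hW Y hY))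
    obtain ⟨f, hf⟩ := hcount.exists_eq_range ⟨Y, mem_transCl_singleton Y⟩
    obtain ⟨k, hk⟩ : Y ∈ Set.range f := hf ▸ mem_transCl_singleton Y
    refine ⟨f ∘ Equiv.swap 0 k, ?_, by simp [hk]⟩
    rw [(Equiv.swap 0 k).surjective.range_comp, ← hf]
  choose e he_range he_zero using henum
  let code : W → Set (ℕ × ℕ) := fun Y => {p | e Y p.1 ∈ e Y p.2}
  have hcode : Function.Injective code := by
    intro Y Y' h
    have hmem i j : e Y i ∈ e Y j ↔ e Y' i ∈ e Y' j := Set.ext_iff.1 h (i, j)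
    have h0 := (isTransitive_transCl _).enum_eq_of_mem_iff (isTransitive_transCl _)
      (he_range Y) (he_range Y') hmem 0
    rw [he_zero, he_zero] at h0
    exact Subtype.ext h0
  rw [← lift_le.{1}, ← cardinalMk_coe_sort]
  simpa using lift_mk_le_lift_mk_of_injective hcode

end TransitiveClosure

section NHierarchy

variable {F : Ordinal → ZFSet.{0}}

lemma IsNHierarchy.card_zero (hF : IsNHierarchy F) : (F 0).card = ℵ₀ := by
  rw [← card_vonNeumann_omega0.{0}]
  congr 1
  ext Y
  rw [hF.1, hFin_iff_mem_vonNeumann_omega0]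

lemma IsNHierarchy.mem_one_iff (hF : IsNHierarchy F) {Y : ZFSet} :
    Y ∈ F 1 ↔ (transCl {Y}).card ≤ ℵ₀ := by
  rw [hF.2.1, memH_iff_card_le, hF.card_zero]

lemma IsNHierarchy.powerset_omega_subset_one (hF : IsNHierarchy F) : powerset omega ⊆ F 1 :=
  fun _ hA => hF.mem_one_iff.2 (card_transCl_singleton_le_aleph0 (mem_powerset.1 hA))

lemma IsNHierarchy.card_one (hF : IsNHierarchy F) : (F 1).card = 2 ^ ℵ₀ :=
  (card_le_two_pow_aleph0_of_countable_transCl fun _ hY => hF.mem_one_iff.1 hY).antisymm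
    (card_powerset_omega ▸ card_mono hF.powerset_omega_subset_one)

lemma IsNHierarchy.mem_two_iff (hF : IsNHierarchy F) {o : ZFSet} (ho : o.IsOrdinal) :
    o ∈ F 2 ↔ o.card ≤ 2 ^ ℵ₀ := by
  rw [← zero_add 2, hF.2.2.1, zero_add, memH_iff_card_le, hF.card_one,
    card_transCl_singleton_le_iff ho.isTransitive (cantor ℵ₀).le]

end NHierarchy

theorem stmt12 (F : Ordinal → ZFSet) (hF : IsNHierarchy F) :
    (∃ f, ZFSurj (F 1) (ZFSet.powerset ZFSet.omega) f) ∧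
    (∃ f, ZFSurj (ZFSet.powerset ZFSet.omega) (F 1) f) ∧
    (∀ o : ZFSet, IsOrd o → o ≠ ∅ →
      (o ∈ F 2 ↔ ∃ f, ZFSurj (ZFSet.powerset ZFSet.omega) o f)) ∧
    (∃ Θ : ZFSet, IsOrd Θ ∧ ¬ CardLE Θ (ZFSet.powerset ZFSet.omega) ∧
      (∀ o ∈ Θ, CardLE o (ZFSet.powerset ZFSet.omega)) ∧
      (∀ Y, Y ∈ Θ ↔ IsOrd Y ∧ Y ∈ F 2)) := by
  have hP : (powerset omega).Nonempty := nonempty_of_mem (mem_powerset.2 (empty_subset omega))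
  refine ⟨exists_zfSurj_of_card_le hP (card_powerset_omega.trans hF.card_one.symm).le,
    exists_zfSurj_of_card_le (hP.mono hF.powerset_omega_subset_one)
      (hF.card_one.trans card_powerset_omega.symm).le,
    fun o ho ho0 => ?_, (Order.succ (2 ^ ℵ₀ : Cardinal)).ord.toZFSet,
    isOrd_iff_isOrdinal.2 (isOrdinal_toZFSet _), ?_, fun o ho => ?_, fun Y => ?_⟩
  · rw [hF.mem_two_iff (isOrd_iff_isOrdinal.1 ho),
      exists_zfSurj_iff_card_le (o.eq_empty_or_nonempty.resolve_left ho0), card_powerset_omega]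
  · rw [cardLE_iff_card_le, Ordinal.card_toZFSet, card_ord, card_powerset_omega]
    exact (Order.lt_succ _).not_ge
  · rw [cardLE_iff_card_le, card_powerset_omega]
    exact (mem_toZFSet_ord_succ_iff.1 ho).2
  · rw [mem_toZFSet_ord_succ_iff, isOrd_iff_isOrdinal]
    exact and_congr_right fun hY => (hF.mem_two_iff hY).symm

end NairianModels
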